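/- Let n ≥ 1 and let X be a subshift of symbolic rank n. Then the following are equivalent: (1) there exists a rank-n word V such that X = X_V and V has a proper rank-n construction; (2) for every rank-n word V such that X = X_V, V has a proper rank-n construction; (3) for every x ∈ X with x ≠ 1^ℤ (the constantly-1 bi-infinite sequence), the σ-orbit of x is dense in X. -/

import Mathlib

namespace SubshiftRank

/-! ### Words over the alphabet {0,1}; `false` plays the role of `0`, `true` of `1`. -/

abbrev Word := List Bool

/-- `ℱ`: the set of finite nonempty words over `{0,1}` beginning and ending with `0`. -/
def FF : Set Word := {w | w ≠ [] ∧ w.head? = some false ∧ w.getLast? = some false}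

/-- `spacer s = 1^s`. -/
def spacer (s : ℕ) : Word := List.replicate s true

/-- A building: a sequence of words `v₁, …, v_k` with spacers `s₁, …, s_k` (the `pairs`),
followed by a final word `v_{k+1}` (the `last`).  The assembled word is
`v₁1^{s₁}v₂1^{s₂}⋯v_k1^{s_k}v_{k+1}`. -/
structure Building where
  pairs : List (Word × ℕ)
  last : Word

/-- The word assembled by a building. -/
def Building.word (b : Building) : Word :=
  b.pairs.foldr (fun p acc => p.1 ++ spacer p.2 ++ acc) b.last

/-- The words `v₁, …, v_{k+1}` used in a building (in order). -/
def Building.pieces (b : Building) : List Word := b.pairs.map Prod.fst ++ [b.last]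

/-- `b` is a building from the set `S`: there is at least one spacer (i.e. `k ≥ 1`, at least
two pieces) and all the pieces belong to `S`. -/
def Building.FromSet (b : Building) (S : Set Word) : Prop :=
  b.pairs ≠ [] ∧ ∀ v ∈ b.pieces, v ∈ S

/-- The first word of a building. -/
def Building.firstPiece (b : Building) : Word := b.pieces.headI

/-- Every word of `S` is used in the building. -/
def Building.UsesAll (b : Building) (S : Set Word) : Prop := ∀ v ∈ S, v ∈ b.pieces

/-- The spacer parameter of the building is bounded by `M`. -/
def Building.SpacersLE (b : Building) (M : ℕ) : Prop := ∀ p ∈ b.pairs, p.2 ≤ M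

/-- `w` is built from `S`. -/
def BuiltFrom (w : Word) (S : Set Word) : Prop := ∃ b : Building, b.FromSet S ∧ b.word = w

/-- The `i`-th level `S_i = {v_{i,1}, …, v_{i,n_i}}` of a generating sequence. -/
def levelSet (ni : ℕ → ℕ) (wd : ℕ → ℕ → Word) (i : ℕ) : Set Word :=
  {w | ∃ j, 1 ≤ j ∧ j ≤ ni i ∧ wd i j = w}

/-- A (symbolic) rank-`n` construction: a rank-`n` generating sequence `v_{i,j}`
(`i ≥ 0`, `1 ≤ j ≤ n_i ≤ n`) together with, for each `i` and `1 ≤ j ≤ n_{i+1}`, one chosen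
building of `v_{i+1,j}` from `S_i`, the building of `v_{i+1,1}` starting with `v_{i,1}`. -/
structure RankConstruction (n : ℕ) where
  ni : ℕ → ℕ
  wd : ℕ → ℕ → Word
  bld : ℕ → ℕ → Building
  ni_pos : ∀ i, 1 ≤ ni i
  ni_le : ∀ i, ni i ≤ n
  mem_FF : ∀ i j, 1 ≤ j → j ≤ ni i → wd i j ∈ FF
  wd_zero : ∀ j, 1 ≤ j → j ≤ ni 0 → wd 0 j = [false]
  bld_from : ∀ i j, 1 ≤ j → j ≤ ni (i + 1) → (bld i j).FromSet (levelSet ni wd i)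
  bld_word : ∀ i j, 1 ≤ j → j ≤ ni (i + 1) → (bld i j).word = wd (i + 1) j
  bld_start : ∀ i, (bld i 1).firstPiece = wd i 1

/-- A rank-`n` construction is proper if `n_i = n` for all `i` and every word of `S_i` is used
in each chosen building. -/
def RankConstruction.Proper {n : ℕ} (c : RankConstruction n) : Prop :=
  (∀ i, c.ni i = n) ∧
    ∀ i j, 1 ≤ j → j ≤ c.ni (i + 1) → (c.bld i j).UsesAll (levelSet c.ni c.wd i)

/-- All spacer parameters of all chosen buildings are bounded by `M`. -/
def RankConstruction.SpacersBoundedBy {n : ℕ} (c : RankConstruction n) (M : ℕ) : Prop :=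
  ∀ i j, 1 ≤ j → j ≤ c.ni (i + 1) → (c.bld i j).SpacersLE M

/-- The spacer parameter of the construction is bounded. -/
def RankConstruction.BoundedSpacer {n : ℕ} (c : RankConstruction n) : Prop :=
  ∃ M, c.SpacersBoundedBy M

/-- `w` is of the form `α1^{s₁}v_{j₁}1^{s₂}v_{j₂}⋯v_{j_{k−1}}1^{s_k}β` where `k ≥ 1`, the
middle words belong to `S`, `α` is a nonempty suffix of a word of `S` and `β` is a nonempty
prefix of a word of `S`. -/
def BadDecomp (w : Word) (S : Set Word) : Prop :=
  ∃ (α β : Word) (mids : List (ℕ × Word)) (sk : ℕ),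
    α ≠ [] ∧ β ≠ [] ∧ (∃ a ∈ S, α <:+ a) ∧ (∃ b ∈ S, β <+: b) ∧
    (∀ p ∈ mids, p.2 ∈ S) ∧
    w = α ++ mids.foldr (fun p acc => spacer p.1 ++ p.2 ++ acc) (spacer sk ++ β)

/-- A rank-`n` construction is good if it is proper and no `v_{i,j}` has a bad decomposition
over `S_i`. -/
def RankConstruction.Good {n : ℕ} (c : RankConstruction n) : Prop :=
  c.Proper ∧ ∀ i j, 1 ≤ j → j ≤ c.ni i → ¬ BadDecomp (c.wd i j) (levelSet c.ni c.wd i)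

/-- The finite word `w` is a prefix (initial segment) of the infinite word `V`. -/
def InfExtends (V : ℕ → Bool) (w : Word) : Prop := ∀ k, k < w.length → w.getD k false = V k

/-- `V = lim_i v_{i,1}` is the infinite word determined by the construction. -/
def RankConstruction.HasLimit {n : ℕ} (c : RankConstruction n) (V : ℕ → Bool) : Prop :=
  (∀ i, InfExtends V (c.wd i 1)) ∧ ∀ m : ℕ, ∃ i, m ≤ (c.wd i 1).length

/-- The infinite word `V` has a rank-`n` construction. -/
def HasRankConstr (V : ℕ → Bool) (n : ℕ) : Prop := ∃ c : RankConstruction n, c.HasLimit V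

/-! ### Occurrences and subshifts -/

/-- The finite word `u` occurs in the infinite word `V` at position `p`. -/
def OccursAtInf (u : Word) (V : ℕ → Bool) (p : ℕ) : Prop :=
  ∀ k, k < u.length → u.getD k false = V (p + k)

/-- `u` is a subword of the infinite word `V`. -/
def OccursInInf (u : Word) (V : ℕ → Bool) : Prop := ∃ p, OccursAtInf u V p

/-- The finite word `u` occurs in the bi-infinite word `x` at position `p`. -/
def OccursAtBi (u : Word) (x : ℤ → Bool) (p : ℤ) : Prop :=
  ∀ k : ℕ, k < u.length → u.getD k false = x (p + (k : ℤ))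

/-- `u` is a subword of the bi-infinite word `x`. -/
def OccursInBi (u : Word) (x : ℤ → Bool) : Prop := ∃ p, OccursAtBi u x p

/-- The Bernoulli shift `σ` on `{0,1}^ℤ`. -/
def shift (x : ℤ → Bool) : ℤ → Bool := fun k => x (k + 1)

/-- The subshift generated by the infinite word `V`. -/
def XV (V : ℕ → Bool) : Set (ℤ → Bool) := {x | ∀ u : Word, OccursInBi u x → OccursInInf u V}

/-- The `σ`-orbit of `x`. -/
def sorbit (x : ℤ → Bool) : Set (ℤ → Bool) := Set.range fun n : ℤ => fun k => x (k + n)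

/-- A subshift: a nonempty closed shift-invariant subset of `{0,1}^ℤ`. -/
def IsSubshift (X : Set (ℤ → Bool)) : Prop := X.Nonempty ∧ IsClosed X ∧ shift '' X = X

/-- A minimal subshift: every orbit is dense. -/
def MinimalSubshift (X : Set (ℤ → Bool)) : Prop :=
  IsSubshift X ∧ ∀ x ∈ X, X ⊆ closure (sorbit x)

/-- `X` has symbolic rank at most `n`. -/
def SymbRankLE (X : Set (ℤ → Bool)) (n : ℕ) : Prop := ∃ V, HasRankConstr V n ∧ X = XV V

/-- `X` has symbolic rank exactly `n`. -/
def SymbRankEq (X : Set (ℤ → Bool)) (n : ℕ) : Prop :=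
  SymbRankLE X n ∧ ∀ m, SymbRankLE X m → n ≤ m

/-- `M` is a minimal subset of the system `(X, shift)`: a nonempty closed shift-invariant
subset of `X` with no proper nonempty closed shift-invariant subset. -/
def IsMinimalSubsetOf (X M : Set (ℤ → Bool)) : Prop :=
  M.Nonempty ∧ IsClosed M ∧ M ⊆ X ∧ shift '' M = M ∧
    ∀ M', M' ⊆ M → M'.Nonempty → IsClosed M' → shift '' M' = M' → M' = M

/-- A bi-infinite word `x` is built from `v`: there is a strictly increasing bi-infinite
sequence of positions, with consecutive gaps at least `|v|` and unbounded in both directions,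
at each of which `v` occurs, and `x` equals `1` outside those occurrences. -/
def BiBuiltFrom (x : ℤ → Bool) (v : Word) : Prop :=
  ∃ pos : ℤ → ℤ, StrictMono pos ∧
    (∀ i : ℤ, pos i + (v.length : ℤ) ≤ pos (i + 1)) ∧
    (∀ n : ℤ, ∃ i : ℤ, n < pos i) ∧ (∀ n : ℤ, ∃ i : ℤ, pos i < n) ∧
    (∀ i : ℤ, OccursAtBi v x (pos i)) ∧
    (∀ p : ℤ, (∀ i : ℤ, ¬ (pos i ≤ p ∧ p < pos i + (v.length : ℤ))) → x p = true)

/-! ### General topological dynamics on (Cantor) metric spaces -/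

/-- Every orbit of `T` is dense. -/
def MinimalHomeo {X : Type*} [TopologicalSpace X] (T : X ≃ₜ X) : Prop :=
  ∀ x : X, Dense (Set.range fun n : ℤ => (T.toEquiv ^ n) x)

/-- The system `(X, T)` is equicontinuous. -/
def EquicontinuousSys {X : Type*} [MetricSpace X] (T : X ≃ₜ X) : Prop :=
  ∀ ε : ℝ, 0 < ε → ∃ δ : ℝ, 0 < δ ∧
    ∀ (n : ℤ) (x y : X), dist x y < δ → dist ((T.toEquiv ^ n) x) ((T.toEquiv ^ n) y) < ε

/-- `M` is a minimal set of `(X, T)`. -/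
def IsMinimalSet {X : Type*} [TopologicalSpace X] (T : X → X) (M : Set X) : Prop :=
  M.Nonempty ∧ IsClosed M ∧ T '' M = M ∧
    ∀ M', M' ⊆ M → M'.Nonempty → IsClosed M' → T '' M' = M' → M' = M

/-- `(X, T)` is essentially minimal: it has a unique minimal set. -/
def EssentiallyMinimal {X : Type*} [TopologicalSpace X] (T : X → X) : Prop :=
  ∃! M, IsMinimalSet T M

/-- `A` has the finite covering property: `⋃_{−N ≤ n ≤ N} T^n A = X` for some `N`. -/
def FiniteCovering {X : Type*} [TopologicalSpace X] (T : X ≃ₜ X) (A : Set X) : Prop :=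
  ∃ N : ℕ, (⋃ n ∈ Finset.Icc (-(N : ℤ)) (N : ℤ), ⇑(T.toEquiv ^ n) '' A) = Set.univ

/-- A finite partition of the whole space into clopen sets. -/
def IsClopenPartition {X : Type*} [TopologicalSpace X] (Q : Finset (Set X)) : Prop :=
  (∀ q ∈ Q, IsClopen q) ∧ (⋃ q ∈ Q, q) = Set.univ ∧
    ∀ q ∈ Q, ∀ q' ∈ Q, q ≠ q' → Disjoint q q'

/-- A Kakutani–Rohlin partition of `(X, T)`: clopen bases `B 0, …, B (d−1)` with heights
`h 0, …, h (d−1)` such that the sets `T^j (B k)` (`j < h k`) form a partition of `X` and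
`⋃_k T^{h k} (B k) = ⋃_k B k`. -/
structure KRPart {X : Type*} [TopologicalSpace X] (T : X → X) where
  d : ℕ
  B : Fin d → Set X
  h : Fin d → ℕ
  d_pos : 0 < d
  h_pos : ∀ k, 0 < h k
  clopen : ∀ k, IsClopen (B k)
  disj : ∀ (k k' : Fin d) (j j' : ℕ), j < h k → j' < h k' → (k, j) ≠ (k', j') →
    Disjoint (T^[j] '' B k) (T^[j'] '' B k')
  cover : (⋃ k, ⋃ j ∈ Finset.range (h k), T^[j] '' B k) = Set.univ
  base_eq : (⋃ k, T^[h k] '' B k) = ⋃ k, B k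

/-- The base of a Kakutani–Rohlin partition. -/
def KRPart.base {X : Type*} [TopologicalSpace X] {T : X → X} (P : KRPart T) : Set X :=
  ⋃ k, P.B k

/-- `(X, T)` has topological rank at most `m` (Kakutani–Rohlin characterization). -/
def TopRankLEGen {X : Type*} [MetricSpace X] (T : X → X) (m : ℕ) : Prop :=
  ∃ x : X, ∀ ε : ℝ, 0 < ε → ∃ P : KRPart T, P.d ≤ m ∧
    (∀ (k : Fin P.d) (j : ℕ), j < P.h k → Metric.diam (T^[j] '' P.B k) < ε) ∧
    Metric.diam P.base < ε ∧ x ∈ P.base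

/-! ### Kakutani–Rohlin partitions and topological rank for subshifts -/

/-- A Kakutani–Rohlin partition of the subshift `(X, σ)`. -/
structure KRPartOn (X : Set (ℤ → Bool)) where
  d : ℕ
  B : Fin d → Set (ℤ → Bool)
  h : Fin d → ℕ
  d_pos : 0 < d
  h_pos : ∀ k, 0 < h k
  subset : ∀ k, B k ⊆ X
  clopen : ∀ k, IsClopen {y : X | (y : ℤ → Bool) ∈ B k}
  disj : ∀ (k k' : Fin d) (j j' : ℕ), j < h k → j' < h k' → (k, j) ≠ (k', j') →
    Disjoint (shift^[j] '' B k) (shift^[j'] '' B k')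
  cover : (⋃ k, ⋃ j ∈ Finset.range (h k), shift^[j] '' B k) = X
  base_eq : (⋃ k, shift^[h k] '' B k) = ⋃ k, B k

/-- The base of a Kakutani–Rohlin partition of a subshift. -/
def KRPartOn.base {X : Set (ℤ → Bool)} (P : KRPartOn X) : Set (ℤ → Bool) := ⋃ k, P.B k

/-- All elements of `A` agree on the window `[−N, N]`; for the canonical metric on `2^ℤ`
this says exactly that `diam(A) ≤ 2^{−N}`. -/
def AgreeOn (N : ℕ) (A : Set (ℤ → Bool)) : Prop :=
  ∀ y ∈ A, ∀ z ∈ A, ∀ k : ℤ, |k| ≤ (N : ℤ) → y k = z k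

/-- The subshift `(X, σ)` has topological rank at most `m` (Kakutani–Rohlin
characterization, with smallness of diameters expressed by agreement on windows,
matching the canonical compatible metric on `2^ℤ`). -/
def TopRankLE (X : Set (ℤ → Bool)) (m : ℕ) : Prop :=
  ∃ x ∈ X, ∀ N : ℕ, ∃ P : KRPartOn X, P.d ≤ m ∧
    (∀ (k : Fin P.d) (j : ℕ), j < P.h k → AgreeOn N (shift^[j] '' P.B k)) ∧
    AgreeOn N P.base ∧ x ∈ P.base

/-! ### Factor maps and conjugacy -/

/-- `φ` is a (topological) factor map from the subshift `Y` onto the subshift `X`. -/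
def IsFactorMapOn (Y X : Set (ℤ → Bool)) (φ : (ℤ → Bool) → (ℤ → Bool)) : Prop :=
  ContinuousOn φ Y ∧ φ '' Y = X ∧ ∀ y ∈ Y, φ (shift y) = shift (φ y)

/-- `X` is a topological factor of `Y`. -/
def SubshiftFactor (Y X : Set (ℤ → Bool)) : Prop := ∃ φ, IsFactorMapOn Y X φ

/-- The subshifts `Y` and `X` are conjugate. -/
def SubshiftConjugate (Y X : Set (ℤ → Bool)) : Prop :=
  ∃ φ, IsFactorMapOn Y X φ ∧ Set.InjOn φ Y

/-- `(X, T)` is conjugate to the subshift `(Y, σ)`. -/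
def ConjugateToSubshift {X : Type*} [TopologicalSpace X] (T : X ≃ₜ X) (Y : Set (ℤ → Bool)) :
    Prop :=
  ∃ φ : X → (ℤ → Bool), Continuous φ ∧ Function.Injective φ ∧ Set.range φ = Y ∧
    ∀ x, φ (T x) = shift (φ x)

/-- The Boolean algebra of sets generated by `G`. -/
inductive GenBoolAlg {X : Type*} (G : Set (Set X)) : Set X → Prop
  | basic (A : Set X) : A ∈ G → GenBoolAlg G A
  | empty : GenBoolAlg G ∅
  | compl (A : Set X) : GenBoolAlg G A → GenBoolAlg G Aᶜ
  | union (A B : Set X) : GenBoolAlg G A → GenBoolAlg G B → GenBoolAlg G (A ∪ B)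

/-- `(T, A)` is generating: the smallest Boolean algebra containing all `T^n A` contains
every clopen set. -/
def Generating {X : Type*} [TopologicalSpace X] (T : X ≃ₜ X) (A : Set X) : Prop :=
  ∀ U : Set X, IsClopen U → GenBoolAlg {B : Set X | ∃ n : ℤ, B = ⇑(T.toEquiv ^ n) '' A} U

/-- The return-times word `Ret_A(x₀) ∈ 2^ℤ` of `x₀` to `A`. -/
noncomputable def retWord {X : Type*} [TopologicalSpace X] (T : X ≃ₜ X) (A : Set X) (x₀ : X) : ℤ → Bool :=
  fun n => @ite _ ((T.toEquiv ^ n) x₀ ∈ A) (Classical.propDecidable _) true false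

/-!
If the construction is proper, every word of level `J + 1` contains `v_{J,1}`. A point `x ∈ X_V`
with a `0` sees a whole word of level `J + 1` around that `0`, so it contains every `v_{J,1}`,
hence every subword of `V`, and its orbit is dense.

Conversely, start from any rank-`n` construction of `V` and keep at each level only the words
used in the building of some `v_{m,1}`. If at every level `i` all of them are used by every kept
word of some higher level, telescoping along those levels gives a proper construction. Otherwise
some kept word `w` of level `i` is avoided by kept words of infinitely many levels, and Kőnig's
lemma gives a chain of such avoiding words, each the first piece of the next. Since `v_{m,1}`
eventually uses `w`, it is not among them, so the limit `V'` of the chain has a construction of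
rank `n - 1`. Now `X_{V'} ⊆ X` contains a point other than `1^ℤ`; by density `X = X_{V'}`,
contradicting the symbolic rank.
-/

section Words

open List

@[simp] lemma length_spacer (s : ℕ) : (spacer s).length = s := length_replicate

lemma getD_spacer {s t : ℕ} (ht : t < s) : (spacer s).getD t false = true := by
  simp [spacer, ht]

lemma getD_append_append_length {α : Type*} (l₁ v l₂ : List α) {d : α} {t : ℕ}
    (ht : t < v.length) : (l₁ ++ (v ++ l₂)).getD (l₁.length + t) d = v.getD t d := by
  rw [getD_append_right _ _ _ _ (by omega), Nat.add_sub_cancel_left, getD_append _ _ _ _ ht]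

lemma getD_eq_of_prefix {α : Type*} {l l' : List α} {d : α} (h : l <+: l') {t : ℕ}
    (ht : t < l.length) : l.getD t d = l'.getD t d := by
  rw [getD_eq_getElem _ _ ht, getD_eq_getElem _ _ (ht.trans_le h.length_le), h.getElem ht]

lemma one_le_length_of_mem_FF {w : Word} (h : w ∈ FF) : 1 ≤ w.length :=
  length_pos_iff.mpr h.1

lemma getD_length_sub_one_of_mem_FF {w : Word} (h : w ∈ FF) :
    w.getD (w.length - 1) false = false := by
  obtain ⟨hne, -, hl⟩ := h
  rw [getLast?_eq_some_getLast hne, Option.some_inj] at hl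
  rw [getD_eq_getElem _ _ (by have := length_pos_iff.mpr hne; omega), ← getLast_eq_getElem hne, hl]

lemma OccursInInf.of_infix {V : ℕ → Bool} {u v : Word} (h : u <:+: v) (hv : OccursInInf v V) :
    OccursInInf u V := by
  obtain ⟨s, t, rfl⟩ := h
  obtain ⟨p, hp⟩ := hv
  refine ⟨p + s.length, fun k hk => ?_⟩
  have := hp (s.length + k) (by simp; omega)
  rw [append_assoc, getD_append_append_length _ _ _ hk] at this
  rw [this, add_assoc]

lemma OccursInBi.of_infix {x : ℤ → Bool} {u v : Word} (h : u <:+: v) (hv : OccursInBi v x) :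
    OccursInBi u x := by
  obtain ⟨s, t, rfl⟩ := h
  obtain ⟨p, hp⟩ := hv
  refine ⟨p + s.length, fun k hk => ?_⟩
  have := hp (s.length + k) (by simp; omega)
  rw [append_assoc, getD_append_append_length _ _ _ hk] at this
  rw [this]
  push_cast
  ring_nf

lemma InfExtends.occursInInf_of_infix {V : ℕ → Bool} {u w : Word} (hw : InfExtends V w)
    (h : u <:+: w) : OccursInInf u V :=
  OccursInInf.of_infix h ⟨0, fun k hk => by rw [zero_add]; exact hw k hk⟩

lemma InfExtends.infix_of_occursAtInf {V : ℕ → Bool} {u w : Word} {p : ℕ}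
    (hw : InfExtends V w) (h : OccursAtInf u V p) (hlen : p + u.length ≤ w.length) :
    u <:+: w := by
  have hu : u = (w.drop p).take u.length := by
    refine ext_getElem (by simp; omega) fun t h₁ h₂ => ?_
    rw [getElem_take, getElem_drop, ← getD_eq_getElem u false h₁,
      ← getD_eq_getElem w false (by omega), h t h₁, hw _ (by omega)]
  rw [hu]
  exact ((w.drop p).take_prefix u.length).isInfix.trans (w.drop_suffix p).isInfix

def window (x : ℤ → Bool) (a : ℤ) (N : ℕ) : Word := ofFn fun t : Fin N => x (a + t)

@[simp] lemma length_window (x : ℤ → Bool) (a : ℤ) (N : ℕ) : (window x a N).length = N :=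
  length_ofFn

lemma getD_window {x : ℤ → Bool} {a : ℤ} {N t : ℕ} (ht : t < N) :
    (window x a N).getD t false = x (a + t) := by
  rw [getD_eq_getElem _ _ (by simpa using ht)]
  simp [window]

lemma occursAtBi_window (x : ℤ → Bool) (a : ℤ) (N : ℕ) : OccursAtBi (window x a N) x a :=
  fun _ hk => getD_window (by simpa using hk)

end Words

section Topology

open Filter Topology

section Discrete

variable {β : Type*} [TopologicalSpace β] [DiscreteTopology β]

lemma eventually_nhds_forall_lt_eq (x : ℤ → β) (a : ℤ) (N : ℕ) :
    ∀ᶠ z in 𝓝 x, ∀ t < N, z (a + t) = x (a + t) := by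
  refine (eventually_all_finite (Set.finite_lt_nat N)).mpr fun t _ => ?_
  have := (continuous_apply (a + t)).continuousAt (x := x)
  rw [ContinuousAt, nhds_discrete β, tendsto_pure] at this
  exact this

lemma mem_closure_of_forall_exists_eq {y : ℤ → β} {S : Set (ℤ → β)}
    (h : ∀ N : ℕ, ∃ z ∈ S, ∀ k : ℤ, |k| ≤ N → z k = y k) : y ∈ closure S := by
  rw [mem_closure_iff_nhds]
  intro t ht
  rw [nhds_pi, mem_pi] at ht
  obtain ⟨I, hIfin, w, hw, hsub⟩ := ht
  obtain ⟨B, hB⟩ := hIfin.bddAbove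
  obtain ⟨A, hA⟩ := hIfin.bddBelow
  obtain ⟨z, hz, hzy⟩ := h (max B (-A)).toNat
  refine ⟨z, hsub fun k hk => ?_, hz⟩
  have h1 := hB hk
  have h2 := hA hk
  rw [hzy k (abs_le.mpr ⟨by omega, by omega⟩)]
  simpa [nhds_discrete] using hw k

end Discrete

lemma mem_closure_sorbit_iff {x y : ℤ → Bool} :
    y ∈ closure (sorbit x) ↔ ∀ u : Word, OccursInBi u y → OccursInBi u x := by
  constructor
  · rintro h u ⟨q, hq⟩
    obtain ⟨-, hz, ⟨m, rfl⟩⟩ := ((eventually_nhds_forall_lt_eq y q u.length).and_frequently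
      (mem_closure_iff_frequently.mp h)).exists
    refine ⟨q + m, fun t ht => ?_⟩
    rw [hq t ht, ← hz t ht, add_right_comm]
  · intro h
    refine mem_closure_of_forall_exists_eq fun N => ?_
    obtain ⟨b, hb⟩ := h _ ⟨-(N : ℤ), occursAtBi_window y (-N) (2 * N + 1)⟩
    refine ⟨fun k => x (k + (b + N)), ⟨b + N, rfl⟩, fun k hk => ?_⟩
    have habs := abs_le.mp hk
    have hkN : (((k + N).toNat : ℕ) : ℤ) = k + N := Int.toNat_of_nonneg (by omega)
    have := hb (k + N).toNat (by simp; omega)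
    rw [getD_window (by omega), hkN, show -(N : ℤ) + (k + N) = k by ring] at this
    rw [this, show b + (k + N) = k + (b + N) by ring]

lemma exists_mem_XV_apply_zero_eq_false {W : ℕ → Bool}
    (hW : ∀ N : ℕ, ∃ p, N ≤ p ∧ W p = false) : ∃ x ∈ XV W, x 0 = false := by
  choose p hp hpW using hW
  -- `toNat` clips negative positions; the windows used below lie at positions `≥ 0` once `m ≥ |q|`
  set y : ℕ → ℤ → Bool := fun m k => W ((p m : ℤ) + k).toNat
  obtain ⟨x, -, hx⟩ := isCompact_univ.exists_mapClusterPt (f := atTop) (u := y) (by simp)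
  refine ⟨x, fun u ⟨q, hq⟩ => ?_, ?_⟩
  · obtain ⟨m, hym, hm⟩ := (hx.frequently (eventually_nhds_forall_lt_eq x q u.length)
      |>.and_eventually (eventually_ge_atTop q.natAbs)).exists
    refine ⟨((p m : ℤ) + q).toNat, fun t ht => ?_⟩
    rw [hq t ht, ← hym t ht]
    have := hp m
    simp only [y]
    congr 1
    omega
  · obtain ⟨m, hm⟩ := (hx.frequently (eventually_nhds_forall_lt_eq x 0 1)).exists
    simpa [y, hpW] using (hm 0 one_pos).symm

end Topology

namespace Building

open List

variable {b : Building} {v : Word}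

@[simp] lemma word_mk_nil (lst : Word) : (Building.mk [] lst).word = lst := rfl

@[simp] lemma word_mk_cons (v : Word) (s : ℕ) (l : List (Word × ℕ)) (lst : Word) :
    (Building.mk ((v, s) :: l) lst).word = v ++ (spacer s ++ (Building.mk l lst).word) := by
  simp [word, append_assoc]

lemma word_mk_append (l₁ l₂ : List (Word × ℕ)) (lst : Word) :
    (Building.mk (l₁ ++ l₂) lst).word = (Building.mk l₁ (Building.mk l₂ lst).word).word := by
  simp [word, foldr_append]

lemma word_mk_append_right (l : List (Word × ℕ)) (w t : Word) :
    (Building.mk l (w ++ t)).word = (Building.mk l w).word ++ t := by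
  induction l with
  | nil => rfl
  | cons p l ih =>
    obtain ⟨v, s⟩ := p
    simp [ih]

@[simp] lemma pieces_mk_cons (v : Word) (s : ℕ) (l : List (Word × ℕ)) (lst : Word) :
    (Building.mk ((v, s) :: l) lst).pieces = v :: (Building.mk l lst).pieces := by
  simp [pieces]

lemma pieces_ne_nil (b : Building) : b.pieces ≠ [] := by simp [pieces]

lemma firstPiece_mem (b : Building) : b.firstPiece ∈ b.pieces := by
  obtain ⟨q, rest, hq⟩ := exists_cons_of_ne_nil b.pieces_ne_nil
  simp [firstPiece, hq]

lemma last_mem_pieces (b : Building) : b.last ∈ b.pieces := by simp [pieces]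

lemma infix_word_of_mem_pieces (hv : v ∈ b.pieces) : v <:+: b.word := by
  obtain ⟨l, lst⟩ := b
  induction l with
  | nil => simp_all [pieces]
  | cons p l ih =>
    obtain ⟨w, s⟩ := p
    rw [word_mk_cons]
    rcases mem_cons.mp ((pieces_mk_cons w s l lst).symm ▸ hv) with rfl | hv
    · exact (prefix_append _ _).isInfix
    · exact (ih hv).trans ((suffix_append _ _).trans (suffix_append _ _)).isInfix

lemma last_suffix_word (b : Building) : b.last <:+ b.word := by
  obtain ⟨l, lst⟩ := b
  induction l with
  | nil => exact suffix_rfl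
  | cons p l ih =>
    obtain ⟨v, s⟩ := p
    rw [word_mk_cons]
    exact ih.trans ((suffix_append _ _).trans (suffix_append _ _))

lemma firstPiece_prefix_word (h : b.pairs ≠ []) : b.firstPiece <+: b.word := by
  obtain ⟨l, lst⟩ := b
  obtain ⟨⟨v, s⟩, l, rfl⟩ := exists_cons_of_ne_nil h
  simp [firstPiece, pieces]

lemma length_firstPiece_add_length_last_le (h : b.pairs ≠ []) :
    b.firstPiece.length + b.last.length ≤ b.word.length := by
  obtain ⟨l, lst⟩ := b
  obtain ⟨⟨v, s⟩, l, rfl⟩ := exists_cons_of_ne_nil h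
  have := (Building.mk l lst).last_suffix_word.length_le
  simp [firstPiece, pieces] at this ⊢
  omega

lemma exists_piece_of_getD_eq_false (b : Building) {k : ℕ} (hk : k < b.word.length)
    (hf : b.word.getD k false = false) :
    ∃ v ∈ b.pieces, ∃ l₁ l₂ : Word, b.word = l₁ ++ (v ++ l₂) ∧
      l₁.length ≤ k ∧ k < l₁.length + v.length := by
  obtain ⟨l, lst⟩ := b
  induction l generalizing k with
  | nil => exact ⟨lst, by simp [pieces], [], [], by simp, by simp, by simpa using hk⟩
  | cons p l ih =>
    obtain ⟨v, s⟩ := p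
    simp only [word_mk_cons, length_append, length_spacer] at hk hf ⊢
    by_cases h1 : k < v.length
    · exact ⟨v, by simp, [], spacer s ++ (Building.mk l lst).word, by simp, by simp, by simpa⟩
    rw [getD_append_right _ _ _ _ (by omega)] at hf
    by_cases h2 : k - v.length < s
    · rw [getD_append _ _ _ _ (by simpa using h2), getD_spacer h2] at hf
      simp at hf
    rw [getD_append_right _ _ _ _ (by simp; omega), length_spacer] at hf
    obtain ⟨w, hw, l₁, l₂, heq, hle, hlt⟩ := ih (k := k - v.length - s) (by omega) hf
    refine ⟨w, by simp [hw], v ++ (spacer s ++ l₁), l₂, by simp [heq], ?_, ?_⟩ <;>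
      simp <;> omega

def subst (b : Building) (β : Word → Building) : Building :=
  ⟨(b.pairs.flatMap fun p => (β p.1).pairs ++ [((β p.1).last, p.2)]) ++ (β b.last).pairs,
    (β b.last).last⟩

lemma pieces_subst (b : Building) (β : Word → Building) :
    (b.subst β).pieces = b.pieces.flatMap fun v => (β v).pieces := by
  simp only [pieces, subst, flatMap_append, flatMap_map, map_append, map_flatMap, append_assoc,
    flatMap_cons, flatMap_nil, map_cons, map_nil, append_nil]

lemma pairs_subst_ne_nil (β : Word → Building) (h : b.pairs ≠ []) : (b.subst β).pairs ≠ [] := by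
  obtain ⟨⟨v, s⟩, l, hl⟩ := exists_cons_of_ne_nil h
  simp [subst, hl]

lemma firstPiece_subst (b : Building) (β : Word → Building) :
    (b.subst β).firstPiece = (β b.firstPiece).firstPiece := by
  obtain ⟨q, rest, hq⟩ := exists_cons_of_ne_nil b.pieces_ne_nil
  obtain ⟨r, rest', hr⟩ := exists_cons_of_ne_nil (β q).pieces_ne_nil
  simp [firstPiece, pieces_subst, hq, hr]

lemma word_subst (b : Building) {β : Word → Building} (h : ∀ v ∈ b.pieces, (β v).word = v) :
    (b.subst β).word = b.word := by
  obtain ⟨l, lst⟩ := b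
  induction l with
  | nil => simpa [subst] using h lst (by simp [pieces])
  | cons p l ih =>
    obtain ⟨v, s⟩ := p
    have ih := ih fun w hw => h w (by simp [hw])
    simp only [subst, flatMap_cons, append_assoc] at ih ⊢
    rw [word_mk_append, word_mk_append, ih, word_mk_cons, word_mk_nil, word_mk_append_right,
      show Building.mk (β v).pairs (β v).last = β v from rfl, h v (by simp), word_mk_cons]

end Building

section Combinatorics

open Filter

variable {α : Type*}

def descend (f : ℕ → α → α) (k : ℕ) : ℕ → α → α
  | 0 => id
  | d + 1 => fun v => descend f k d (f (k + d) v)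

lemma descend_succ (f : ℕ → α → α) (k d : ℕ) (v : α) :
    descend f k (d + 1) v = f k (descend f (k + 1) d v) := by
  induction d generalizing v with
  | zero => rfl
  | succ d ih =>
    show descend f k (d + 1) (f (k + (d + 1)) v) = f k (descend f (k + 1) d (f (k + 1 + d) v))
    rw [ih, Nat.add_right_comm k 1 d]
    rfl

lemma descend_mem {D : ℕ → Set α} {f : ℕ → α → α} (hf : ∀ k, ∀ v ∈ D (k + 1), f k v ∈ D k)
    (k d : ℕ) {v : α} (hv : v ∈ D (k + d)) : descend f k d v ∈ D k := by
  induction d generalizing v with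
  | zero => exact hv
  | succ d ih => exact ih (hf _ v hv)

theorem exists_seq_of_finite_inverse_system (D : ℕ → Set α) (hfin : ∀ k, (D k).Finite)
    (hne : ∀ k, (D k).Nonempty) (f : ℕ → α → α) (hf : ∀ k, ∀ v ∈ D (k + 1), f k v ∈ D k) :
    ∃ u : ℕ → α, (∀ k, u k ∈ D k) ∧ ∀ k, f k (u (k + 1)) = u k := by
  choose w hw using hne
  set U := Ultrafilter.of (atTop : Filter ℕ)
  have hU : ∀ k, ∀ᶠ m in (U : Filter ℕ), k ≤ m := fun k =>
    Ultrafilter.of_le _ (eventually_ge_atTop k)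
  set g : ℕ → ℕ → α := fun k m => descend f k (m - k) (w m)
  have hg : ∀ k, D k ∈ U.map (g k) := fun k =>
    (hU k).mono fun m hm => descend_mem hf k _ (by rw [Nat.add_sub_cancel' hm]; exact hw m)
  choose u hu hUu using fun k => Ultrafilter.eq_pure_of_finite_mem (hfin k) (hg k)
  have hfib : ∀ k, ∀ᶠ m in (U : Filter ℕ), g k m = u k := fun k =>
    show {u k} ∈ U.map (g k) by rw [hUu k]; exact Set.mem_singleton _
  refine ⟨u, hu, fun k => ?_⟩
  obtain ⟨m, hm, hk, hk1⟩ := ((hU (k + 1)).and ((hfib k).and (hfib (k + 1)))).exists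
  rw [← hk, ← hk1]
  simp only [g]
  rw [show m - k = m - (k + 1) + 1 by omega, descend_succ]

lemma exists_enumeration {T : Set α} (hfin : T.Finite) {a : α} (ha : a ∈ T) {N : ℕ}
    (hcard : T.ncard ≤ N) :
    ∃ e : ℕ → α, e 1 = a ∧ (∀ j, 1 ≤ j → j ≤ N → e j ∈ T) ∧
      ∀ v ∈ T, ∃ j, 1 ≤ j ∧ j ≤ N ∧ e j = v := by
  classical
  set l := a :: (hfin.toFinset.erase a).toList
  have hl : ∀ v, v ∈ l ↔ v ∈ T := fun v => by
    by_cases hv : v = a <;> simp [l, hv, ha]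
  have hlen : l.length = T.ncard := by
    rw [Set.ncard_eq_toFinset_card T hfin]
    rw [List.length_cons, Finset.length_toList, Finset.card_erase_of_mem (hfin.mem_toFinset.mpr ha)]
    exact Nat.sub_add_cancel (Finset.card_pos.mpr ⟨a, hfin.mem_toFinset.mpr ha⟩)
  refine ⟨fun j => l.getD (j - 1) a, rfl, fun j _ _ => ?_, fun v hv => ?_⟩
  · show l.getD (j - 1) a ∈ T
    by_cases hj : j - 1 < l.length
    · rw [List.getD_eq_getElem _ _ hj, ← hl]
      exact List.getElem_mem hj
    · rwa [List.getD_eq_default _ _ (by omega)]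
  · obtain ⟨i, hi, rfl⟩ := List.mem_iff_getElem.mp ((hl v).mpr hv)
    exact ⟨i + 1, by omega, by omega, by
      show l.getD (i + 1 - 1) a = l[i]
      rw [Nat.add_sub_cancel, List.getD_eq_getElem _ _ hi]⟩

end Combinatorics

namespace RankConstruction

section

open List

lemma one_le_rank {n : ℕ} (c : RankConstruction n) : 1 ≤ n := (c.ni_pos 0).trans (c.ni_le 0)

variable {n : ℕ} (c : RankConstruction n)

abbrev level (i : ℕ) : Set Word := levelSet c.ni c.wd i

lemma wd_one_mem_level (i : ℕ) : c.wd i 1 ∈ c.level i := ⟨1, le_rfl, c.ni_pos i, rfl⟩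

lemma level_subset_FF (i : ℕ) : c.level i ⊆ FF := by
  rintro w ⟨j, h1, h2, rfl⟩
  exact c.mem_FF i j h1 h2

lemma level_eq_image (i : ℕ) : c.level i = (c.wd i) '' Set.Icc 1 (c.ni i) := by
  ext w
  simp [levelSet, and_assoc]

lemma level_finite (i : ℕ) : (c.level i).Finite := by
  rw [level_eq_image]
  exact (Set.finite_Icc _ _).image _

lemma ncard_level_le (i : ℕ) : (c.level i).ncard ≤ n := by
  rw [level_eq_image]
  refine (Set.ncard_image_le (Set.finite_Icc _ _)).trans ?_
  rw [← Finset.coe_Icc, Set.ncard_coe_finset, Nat.card_Icc]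
  have := c.ni_le i
  omega

lemma level_zero : c.level 0 = {[false]} := by
  refine Set.Subset.antisymm ?_ (Set.singleton_subset_iff.mpr ?_)
  · rintro w ⟨j, h1, h2, rfl⟩
    exact c.wd_zero j h1 h2
  · rw [← c.wd_zero 1 le_rfl (c.ni_pos 0)]
    exact c.wd_one_mem_level 0

lemma wd_one_prefix_succ (i : ℕ) :
    c.wd i 1 <+: c.wd (i + 1) 1 ∧ (c.wd i 1).length < (c.wd (i + 1) 1).length := by
  have hfrom := c.bld_from i 1 le_rfl (c.ni_pos (i + 1))
  have hlast := one_le_length_of_mem_FF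
    (c.level_subset_FF i (hfrom.2 _ (Building.last_mem_pieces _)))
  have hpre := Building.firstPiece_prefix_word hfrom.1
  have hlen := Building.length_firstPiece_add_length_last_le hfrom.1
  rw [c.bld_start, c.bld_word i 1 le_rfl (c.ni_pos (i + 1))] at hpre hlen
  exact ⟨hpre, by omega⟩

lemma wd_one_prefix {i i' : ℕ} (h : i ≤ i') : c.wd i 1 <+: c.wd i' 1 := by
  induction i', h using Nat.le_induction with
  | base => exact prefix_rfl
  | succ i' _ ih => exact ih.trans (c.wd_one_prefix_succ i').1

lemma le_length_wd_one (i : ℕ) : i + 1 ≤ (c.wd i 1).length := by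
  induction i with
  | zero => simp [c.wd_zero 1 le_rfl (c.ni_pos 0)]
  | succ i ih => have := (c.wd_one_prefix_succ i).2; omega

lemma exists_hasLimit : ∃ V, c.HasLimit V := by
  refine ⟨fun k => (c.wd k 1).getD k false, fun i t ht => ?_, fun m => ⟨m, ?_⟩⟩
  · rcases le_total i t with h | h
    · exact getD_eq_of_prefix (c.wd_one_prefix h) ht
    · exact (getD_eq_of_prefix (c.wd_one_prefix h) (by have := c.le_length_wd_one t; omega)).symm
  · have := c.le_length_wd_one m
    omega

lemma hasLimit_of_infExtends {V : ℕ → Bool} (h : ∀ i, InfExtends V (c.wd i 1)) :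
    c.HasLimit V :=
  ⟨h, fun m => ⟨m, by have := c.le_length_wd_one m; omega⟩⟩

namespace HasLimit

variable {c} {V : ℕ → Bool} (hlim : c.HasLimit V)
include hlim

lemma exists_infix_wd_one {u : Word} (hu : OccursInInf u V) : ∃ i, u <:+: c.wd i 1 := by
  obtain ⟨p, hp⟩ := hu
  obtain ⟨i, hi⟩ := hlim.2 (p + u.length)
  exact ⟨i, (hlim.1 i).infix_of_occursAtInf hp hi⟩

lemma exists_ge_eq_false (N : ℕ) : ∃ p, N ≤ p ∧ V p = false := by
  have hlen := c.le_length_wd_one N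
  refine ⟨(c.wd N 1).length - 1, by omega, ?_⟩
  rw [← hlim.1 N _ (by omega)]
  exact getD_length_sub_one_of_mem_FF (c.mem_FF N 1 le_rfl (c.ni_pos N))

end HasLimit

open scoped Classical in
/-- For `v = v_{i+1,1}` this is the building of index `1`, the only one known to start with
`v_{i,1}`: the same word may also carry other indices. -/
noncomputable def bldOf (i : ℕ) (v : Word) : Building :=
  if v = c.wd (i + 1) 1 then c.bld i 1
  else if h : v ∈ c.level (i + 1) then c.bld i h.choose else c.bld i 1

variable {c}

lemma exists_bldOf_eq {i : ℕ} {v : Word} (hv : v ∈ c.level (i + 1)) :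
    ∃ j, 1 ≤ j ∧ j ≤ c.ni (i + 1) ∧ c.wd (i + 1) j = v ∧ c.bldOf i v = c.bld i j := by
  unfold bldOf
  split_ifs with h
  · exact ⟨1, le_rfl, c.ni_pos _, h.symm, rfl⟩
  · exact ⟨hv.choose, hv.choose_spec.1, hv.choose_spec.2.1, hv.choose_spec.2.2, rfl⟩

lemma bldOf_word {i : ℕ} {v : Word} (hv : v ∈ c.level (i + 1)) : (c.bldOf i v).word = v := by
  obtain ⟨j, h1, h2, rfl, hb⟩ := exists_bldOf_eq hv
  rw [hb, c.bld_word i j h1 h2]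

lemma bldOf_fromSet {i : ℕ} {v : Word} (hv : v ∈ c.level (i + 1)) :
    (c.bldOf i v).FromSet (c.level i) := by
  obtain ⟨j, h1, h2, rfl, hb⟩ := exists_bldOf_eq hv
  rw [hb]
  exact c.bld_from i j h1 h2

variable (c)

lemma firstPiece_bldOf_wd_one (i : ℕ) : (c.bldOf i (c.wd (i + 1) 1)).firstPiece = c.wd i 1 := by
  rw [bldOf, if_pos rfl, c.bld_start]

/-- Builds a word of level `i + k + 1` from level `i`. -/
noncomputable def iterBld (i : ℕ) : ℕ → Word → Building
  | 0 => c.bldOf i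
  | k + 1 => fun v => (c.bldOf (i + k + 1) v).subst (iterBld i k)

lemma iterBld_succ (i k : ℕ) (v : Word) :
    c.iterBld i (k + 1) v = (c.bldOf (i + k + 1) v).subst (c.iterBld i k) := rfl

lemma pieces_iterBld_succ (i k : ℕ) (v : Word) :
    (c.iterBld i (k + 1) v).pieces =
      (c.bldOf (i + k + 1) v).pieces.flatMap fun u => (c.iterBld i k u).pieces := by
  rw [iterBld_succ, Building.pieces_subst]

lemma pieces_iterBld_succ' (k : ℕ) : ∀ i v, (c.iterBld i (k + 1) v).pieces =
    (c.iterBld (i + 1) k v).pieces.flatMap fun u => (c.bldOf i u).pieces := by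
  induction k with
  | zero => intro i v; exact c.pieces_iterBld_succ i 0 v
  | succ k ih =>
    intro i v
    rw [pieces_iterBld_succ, pieces_iterBld_succ, flatMap_assoc, Nat.add_right_comm i 1 k]
    simp only [ih i]
    rfl

variable {c}

lemma iterBld_word {i : ℕ} : ∀ {k : ℕ} {v : Word}, v ∈ c.level (i + k + 1) →
    (c.iterBld i k v).word = v
  | 0, _, hv => bldOf_word hv
  | k + 1, v, hv => by
    have hv : v ∈ c.level (i + k + 1 + 1) := hv
    rw [iterBld_succ, Building.word_subst _ fun u hu => iterBld_word ((bldOf_fromSet hv).2 u hu)]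
    exact bldOf_word hv

lemma iterBld_fromSet {i : ℕ} : ∀ {k : ℕ} {v : Word}, v ∈ c.level (i + k + 1) →
    (c.iterBld i k v).FromSet (c.level i)
  | 0, _, hv => bldOf_fromSet hv
  | k + 1, v, hv => by
    refine ⟨Building.pairs_subst_ne_nil _ (bldOf_fromSet hv).1, fun u hu => ?_⟩
    rw [pieces_iterBld_succ, mem_flatMap] at hu
    obtain ⟨w, hw, hu⟩ := hu
    exact (iterBld_fromSet ((bldOf_fromSet hv).2 w hw)).2 u hu

variable (c)

lemma firstPiece_iterBld_wd_one (i : ℕ) :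
    ∀ k, (c.iterBld i k (c.wd (i + k + 1) 1)).firstPiece = c.wd i 1
  | 0 => c.firstPiece_bldOf_wd_one i
  | k + 1 => by
    rw [iterBld_succ, Building.firstPiece_subst, show i + (k + 1) + 1 = i + k + 1 + 1 from rfl,
      c.firstPiece_bldOf_wd_one]
    exact firstPiece_iterBld_wd_one i k

def usedIn (i k : ℕ) : Set Word := {u | u ∈ (c.iterBld i k (c.wd (i + k + 1) 1)).pieces}

def eventuallyUsed (i : ℕ) : Set Word := ⋃ k, c.usedIn i k

lemma usedIn_mono (i : ℕ) : Monotone (c.usedIn i) := by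
  refine monotone_nat_of_le_succ fun k u hu => ?_
  show u ∈ (c.iterBld i (k + 1) (c.wd (i + (k + 1) + 1) 1)).pieces
  rw [pieces_iterBld_succ, mem_flatMap]
  refine ⟨c.wd (i + k + 1) 1, ?_, hu⟩
  rw [← c.firstPiece_bldOf_wd_one (i + k + 1)]
  exact Building.firstPiece_mem _

lemma wd_one_mem_eventuallyUsed (i : ℕ) : c.wd i 1 ∈ c.eventuallyUsed i :=
  Set.mem_iUnion.mpr ⟨0, by
    show c.wd i 1 ∈ (c.iterBld i 0 (c.wd (i + 0 + 1) 1)).pieces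
    rw [← c.firstPiece_iterBld_wd_one i 0]
    exact Building.firstPiece_mem _⟩

lemma eventuallyUsed_subset_level (i : ℕ) : c.eventuallyUsed i ⊆ c.level i :=
  Set.iUnion_subset fun _ _ hu => (iterBld_fromSet (c.wd_one_mem_level _)).2 _ hu

lemma eventuallyUsed_finite (i : ℕ) : (c.eventuallyUsed i).Finite :=
  (c.level_finite i).subset (c.eventuallyUsed_subset_level i)

lemma ncard_eventuallyUsed_le (i : ℕ) : (c.eventuallyUsed i).ncard ≤ n :=
  (Set.ncard_le_ncard (c.eventuallyUsed_subset_level i) (c.level_finite i)).trans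
    (c.ncard_level_le i)

lemma eventuallyUsed_zero : c.eventuallyUsed 0 = {[false]} := by
  refine Set.Subset.antisymm (c.level_zero ▸ c.eventuallyUsed_subset_level 0) ?_
  rw [Set.singleton_subset_iff, ← c.wd_zero 1 le_rfl (c.ni_pos 0)]
  exact c.wd_one_mem_eventuallyUsed 0

def EventuallyUsedUniformly : Prop :=
  ∀ i, ∃ k, ∀ v ∈ c.eventuallyUsed (i + k + 1), (c.iterBld i k v).UsesAll (c.eventuallyUsed i)

variable {c}

lemma mem_eventuallyUsed_of_mem_pieces_bldOf {i : ℕ} {v u : Word}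
    (hv : v ∈ c.eventuallyUsed (i + 1)) (hu : u ∈ (c.bldOf i v).pieces) :
    u ∈ c.eventuallyUsed i := by
  obtain ⟨k, hk⟩ := Set.mem_iUnion.mp hv
  refine Set.mem_iUnion.mpr ⟨k + 1, ?_⟩
  show u ∈ (c.iterBld i (k + 1) (c.wd (i + (k + 1) + 1) 1)).pieces
  rw [pieces_iterBld_succ', mem_flatMap]
  exact ⟨v, by rwa [show i + (k + 1) + 1 = i + 1 + k + 1 by omega], hu⟩

lemma mem_eventuallyUsed_of_mem_pieces_iterBld {i : ℕ} :
    ∀ {k : ℕ} {v u : Word}, v ∈ c.eventuallyUsed (i + k + 1) →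
      u ∈ (c.iterBld i k v).pieces → u ∈ c.eventuallyUsed i
  | 0, _, _, hv, hu => mem_eventuallyUsed_of_mem_pieces_bldOf hv hu
  | k + 1, _, _, hv, hu => by
    rw [pieces_iterBld_succ, mem_flatMap] at hu
    obtain ⟨w, hw, hu⟩ := hu
    exact mem_eventuallyUsed_of_mem_pieces_iterBld
      (mem_eventuallyUsed_of_mem_pieces_bldOf hv hw) hu

lemma HasLimit.occursInInf_of_mem_eventuallyUsed {V : ℕ → Bool} (hlim : c.HasLimit V)
    {i : ℕ} {u : Word} (hu : u ∈ c.eventuallyUsed i) : OccursInInf u V := by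
  obtain ⟨k, hk⟩ := Set.mem_iUnion.mp hu
  have := Building.infix_word_of_mem_pieces hk
  rw [iterBld_word (c.wd_one_mem_level _)] at this
  exact (hlim.1 _).occursInInf_of_infix this

end

section

lemma exists_of_levels {N : ℕ} (T : ℕ → Set Word) (top : ℕ → Word)
    (bld : ℕ → Word → Building) (hT0 : T 0 = {[false]}) (hfin : ∀ t, (T t).Finite)
    (hcard : ∀ t, (T t).ncard ≤ N) (hFF : ∀ t, T t ⊆ FF) (htop : ∀ t, top t ∈ T t)
    (hfrom : ∀ t, ∀ v ∈ T (t + 1), (bld t v).FromSet (T t))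
    (hword : ∀ t, ∀ v ∈ T (t + 1), (bld t v).word = v)
    (hstart : ∀ t, (bld t (top (t + 1))).firstPiece = top t) :
    ∃ c : RankConstruction N, (∀ t, c.ni t = N) ∧ (∀ t, c.wd t 1 = top t) ∧
      (∀ t, c.level t = T t) ∧ ∀ t j, 1 ≤ j → j ≤ N → c.bld t j = bld t (c.wd (t + 1) j) := by
  have hN : 1 ≤ N := by simpa [hT0] using hcard 0
  -- levels are enumerated with repetitions, so that each has exactly `N` indices
  choose e he1 hemem hesurj using fun t => exists_enumeration (hfin t) (htop t) (hcard t)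
  have hlevel : ∀ t, levelSet (fun _ => N) e t = T t := fun t =>
    Set.Subset.antisymm (by rintro w ⟨j, h1, h2, rfl⟩; exact hemem t j h1 h2) (hesurj t)
  refine ⟨⟨fun _ => N, e, fun t j => bld t (e (t + 1) j), fun _ => hN, fun _ => le_rfl,
    fun i j h1 h2 => hFF i (hemem i j h1 h2), fun j h1 h2 => by simpa [hT0] using hemem 0 j h1 h2,
    fun i j h1 h2 => hlevel i ▸ hfrom i _ (hemem (i + 1) j h1 h2),
    fun i j h1 h2 => hword i _ (hemem (i + 1) j h1 h2),
    fun i => by simp only [he1, hstart]⟩, fun _ => rfl, he1, hlevel, fun _ _ _ _ => rfl⟩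

variable {n : ℕ} {c : RankConstruction n} {V : ℕ → Bool}

lemma HasLimit.exists_proper_of_eventuallyUsedUniformly (hlim : c.HasLimit V)
    (H : c.EventuallyUsedUniformly) :
    ∃ c' : RankConstruction n, c'.HasLimit V ∧ c'.Proper := by
  choose gap hgap using H
  let idx : ℕ → ℕ := fun t => Nat.rec 0 (fun _ i => i + gap i + 1) t
  obtain ⟨c', hni, hwd, hlevel, hbld⟩ := exists_of_levels (N := n)
    (fun t => c.eventuallyUsed (idx t)) (fun t => c.wd (idx t) 1)
    (fun t => c.iterBld (idx t) (gap (idx t))) c.eventuallyUsed_zero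
    (fun _ => c.eventuallyUsed_finite _) (fun _ => c.ncard_eventuallyUsed_le _)
    (fun _ => (c.eventuallyUsed_subset_level _).trans (c.level_subset_FF _))
    (fun _ => c.wd_one_mem_eventuallyUsed _)
    (fun _ _ hv => ⟨(iterBld_fromSet (c.eventuallyUsed_subset_level _ hv)).1,
      fun _ hu => mem_eventuallyUsed_of_mem_pieces_iterBld hv hu⟩)
    (fun _ _ hv => iterBld_word (c.eventuallyUsed_subset_level _ hv))
    (fun t => c.firstPiece_iterBld_wd_one (idx t) (gap (idx t)))
  refine ⟨c', c'.hasLimit_of_infExtends fun t => hwd t ▸ hlim.1 _, hni, fun t j h1 h2 => ?_⟩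
  change (c'.bld t j).UsesAll (c'.level t)
  rw [hbld t j h1 (hni (t + 1) ▸ h2), hlevel]
  exact hgap (idx t) _ (hlevel (t + 1) ▸ ⟨j, h1, h2, rfl⟩)

lemma exists_rankConstruction_of_chain {N : ℕ} (j : ℕ)
    (S : ℕ → Set Word) (u : ℕ → Word) (hS : ∀ k, S k ⊆ c.eventuallyUsed (j + k + 1))
    (hcard : ∀ k, (S k).ncard ≤ N)
    (hdesc : ∀ k, ∀ v ∈ S (k + 1), ∀ w ∈ (c.bldOf (j + k + 1) v).pieces, w ∈ S k)
    (hu : ∀ k, u k ∈ S k) (hchain : ∀ k, (c.bldOf (j + k + 1) (u (k + 1))).firstPiece = u k) :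
    ∃ c' : RankConstruction N, ∀ t, c'.wd (t + 1) 1 = u t := by
  have hlev : ∀ k, S k ⊆ c.level (j + k + 1) := fun k =>
    (hS k).trans (c.eventuallyUsed_subset_level _)
  have hfin : ∀ k, (S k).Finite := fun k => (c.eventuallyUsed_finite _).subset (hS k)
  have hN : 1 ≤ N := ((Set.ncard_pos (hfin 0)).mpr ⟨_, hu 0⟩).trans_le (hcard 0)
  have hlev0 : ∀ v ∈ S 0, v ∈ c.level (0 + j + 1) := fun v hv => by
    simpa using hlev 0 hv
  obtain ⟨c', -, hwd, -, -⟩ := exists_of_levels (N := N)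
    (fun | 0 => {[false]} | t + 1 => S t) (fun | 0 => [false] | t + 1 => u t)
    (fun | 0 => c.iterBld 0 j | t + 1 => c.bldOf (j + t + 1)) rfl
    (by rintro (_ | t); exacts [Set.finite_singleton _, hfin t])
    (by rintro (_ | t); exacts [by simpa using hN, hcard t])
    (by rintro (_ | t); exacts [by simp [FF], (hlev t).trans (c.level_subset_FF _)])
    (by rintro (_ | t); exacts [rfl, hu t])
    (by
      rintro (_ | t) v hv
      · exact c.level_zero ▸ iterBld_fromSet (hlev0 v hv)
      · exact ⟨(bldOf_fromSet (hlev (t + 1) hv)).1, hdesc t v hv⟩)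
    (by
      rintro (_ | t) v hv
      exacts [iterBld_word (hlev0 v hv), bldOf_word (hlev (t + 1) hv)])
    (by
      rintro (_ | t)
      · have := (iterBld_fromSet (hlev0 _ (hu 0))).2 _ (Building.firstPiece_mem _)
        rwa [c.level_zero] at this
      · exact hchain t)
  exact ⟨c', fun t => hwd (t + 1)⟩

lemma HasLimit.exists_hasRankConstr_of_chain (hlim : c.HasLimit V) {N : ℕ} (j : ℕ)
    (S : ℕ → Set Word) (u : ℕ → Word) (hS : ∀ k, S k ⊆ c.eventuallyUsed (j + k + 1))
    (hcard : ∀ k, (S k).ncard ≤ N)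
    (hdesc : ∀ k, ∀ v ∈ S (k + 1), ∀ w ∈ (c.bldOf (j + k + 1) v).pieces, w ∈ S k)
    (hu : ∀ k, u k ∈ S k) (hchain : ∀ k, (c.bldOf (j + k + 1) (u (k + 1))).firstPiece = u k) :
    ∃ V', HasRankConstr V' N ∧ ∀ s, OccursInInf s V' → OccursInInf s V := by
  obtain ⟨c', hwd⟩ := exists_rankConstruction_of_chain j S u hS hcard hdesc hu hchain
  obtain ⟨V', hV'⟩ := c'.exists_hasLimit
  refine ⟨V', ⟨c', hV'⟩, fun s hs => ?_⟩
  obtain ⟨t, ht⟩ := hV'.exists_infix_wd_one hs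
  rcases t with _ | t
  · rw [c'.wd_zero 1 le_rfl (c'.ni_pos 0), ← c.wd_zero 1 le_rfl (c.ni_pos 0)] at ht
    exact (hlim.1 0).occursInInf_of_infix ht
  · rw [hwd t] at ht
    exact (hlim.occursInInf_of_mem_eventuallyUsed (hS t (hu t))).of_infix ht

open Filter

variable (c)

def avoiding (i : ℕ) (w : Word) (k : ℕ) : Set Word :=
  {v | v ∈ c.eventuallyUsed (i + k + 1) ∧ w ∉ (c.iterBld i k v).pieces}

variable {c} {i : ℕ} {w : Word}

lemma avoiding_finite (k : ℕ) : (c.avoiding i w k).Finite :=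
  (c.eventuallyUsed_finite _).subset fun _ hv => hv.1

lemma mem_avoiding_of_mem_pieces_bldOf {k : ℕ} {v u : Word} (hv : v ∈ c.avoiding i w (k + 1))
    (hu : u ∈ (c.bldOf (i + k + 1) v).pieces) : u ∈ c.avoiding i w k :=
  ⟨mem_eventuallyUsed_of_mem_pieces_bldOf hv.1 hu, fun hw =>
    hv.2 (by rw [pieces_iterBld_succ, List.mem_flatMap]; exact ⟨u, hu, hw⟩)⟩

lemma avoiding_nonempty (h : ∃ᶠ k in atTop, (c.avoiding i w k).Nonempty) (k : ℕ) :
    (c.avoiding i w k).Nonempty := by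
  obtain ⟨k', hk', hk⟩ := (h.and_eventually (eventually_ge_atTop k)).exists
  obtain ⟨d, rfl⟩ := Nat.exists_eq_add_of_le hk
  induction d with
  | zero => exact hk'
  | succ d ih =>
    obtain ⟨v, hv⟩ := hk'
    exact ih ⟨_, mem_avoiding_of_mem_pieces_bldOf hv (Building.firstPiece_mem _)⟩ (by omega)

lemma eventually_wd_one_not_mem_avoiding (hw : w ∈ c.eventuallyUsed i) :
    ∀ᶠ k in atTop, c.wd (i + k + 1) 1 ∉ c.avoiding i w k := by
  obtain ⟨k₀, hk₀⟩ := Set.mem_iUnion.mp hw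
  filter_upwards [eventually_ge_atTop k₀] with k hk hmem
  exact hmem.2 (c.usedIn_mono i hk hk₀)

lemma ncard_avoiding_le {k : ℕ} (h : c.wd (i + k + 1) 1 ∉ c.avoiding i w k) :
    (c.avoiding i w k).ncard ≤ n - 1 := by
  have hsub : c.avoiding i w k ⊆ c.eventuallyUsed (i + k + 1) \ {c.wd (i + k + 1) 1} :=
    fun v hv => ⟨hv.1, fun hv' => h (hv' ▸ hv)⟩
  have := Set.ncard_le_ncard hsub (c.eventuallyUsed_finite _).sdiff
  rw [Set.ncard_sdiff_singleton_of_mem (c.wd_one_mem_eventuallyUsed _)] at this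
  have := c.ncard_eventuallyUsed_le (i + k + 1)
  omega

lemma HasLimit.exists_hasRankConstr_pred (hlim : c.HasLimit V)
    (H : ¬ c.EventuallyUsedUniformly) :
    ∃ V', HasRankConstr V' (n - 1) ∧ ∀ s, OccursInInf s V' → OccursInInf s V := by
  simp only [EventuallyUsedUniformly, Building.UsesAll] at H
  push Not at H
  obtain ⟨i, hi⟩ := H
  obtain ⟨w, hw, hfreq⟩ : ∃ w ∈ c.eventuallyUsed i, ∃ᶠ k in atTop, (c.avoiding i w k).Nonempty := by
    by_contra! h
    obtain ⟨k, hk⟩ := ((eventually_all_finite (c.eventuallyUsed_finite i)).mpr h).exists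
    obtain ⟨v, hv, w, hw, hwv⟩ := hi k
    exact Set.notMem_empty v (hk w hw ▸ ⟨hv, hwv⟩)
  obtain ⟨m, hm⟩ := (eventually_wd_one_not_mem_avoiding hw).exists_forall_of_atTop
  obtain ⟨u, hu, hchain⟩ := exists_seq_of_finite_inverse_system
    (fun k => c.avoiding i w (m + k)) (fun _ => avoiding_finite _)
    (fun _ => avoiding_nonempty hfreq _) (fun k v => (c.bldOf (i + (m + k) + 1) v).firstPiece)
    (fun _ _ hv => mem_avoiding_of_mem_pieces_bldOf hv (Building.firstPiece_mem _))
  refine hlim.exists_hasRankConstr_of_chain (i + m) _ u (fun k v hv => ?_)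
    (fun k => ncard_avoiding_le (hm _ (by omega))) (fun k v hv w hw => ?_) hu
    (fun k => ?_)
  · simpa only [Nat.add_assoc] using hv.1
  · exact mem_avoiding_of_mem_pieces_bldOf hv (by simpa only [Nat.add_assoc] using hw)
  · simpa only [Nat.add_assoc] using hchain k

lemma HasLimit.exists_proper_of_forall_dense (hlim : c.HasLimit V)
    (hrank : ∀ m, SymbRankLE (XV V) m → n ≤ m)
    (hdense : ∀ x ∈ XV V, x ≠ (fun _ => true) → XV V ⊆ closure (sorbit x)) :
    ∃ c' : RankConstruction n, c'.HasLimit V ∧ c'.Proper := by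
  by_cases H : c.EventuallyUsedUniformly
  · exact hlim.exists_proper_of_eventuallyUsedUniformly H
  obtain ⟨V', ⟨c', hV'⟩, hsub⟩ := hlim.exists_hasRankConstr_pred H
  obtain ⟨x, hx, hx0⟩ := exists_mem_XV_apply_zero_eq_false hV'.exists_ge_eq_false
  have hclosure := hdense x (fun u hu => hsub u (hx u hu)) fun h => by simp [h] at hx0
  have hXV : XV V = XV V' :=
    (hclosure.trans fun y hy u hu => hx u (mem_closure_sorbit_iff.mp hy u hu)).antisymm
      fun y hy u hu => hsub u (hy u hu)
  have := hrank (n - 1) ⟨V', ⟨c', hV'⟩, hXV⟩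
  have := c.one_le_rank
  omega

lemma HasLimit.exists_occursAtInf_level (hlim : c.HasLimit V) (J : ℕ) {p : ℕ}
    (hp : V p = false) : ∃ v ∈ c.level J, ∃ q, OccursAtInf v V q ∧ q ≤ p ∧ p < q + v.length := by
  obtain ⟨i, hi⟩ := hlim.2 (p + 1)
  have hlen : p < (c.wd (J + i + 1) 1).length := by
    have := (c.wd_one_prefix (show i ≤ J + i + 1 by omega)).length_le
    omega
  have hword : (c.iterBld J i (c.wd (J + i + 1) 1)).word = c.wd (J + i + 1) 1 :=
    iterBld_word (c.wd_one_mem_level _)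
  obtain ⟨v, hv, l₁, l₂, heq, hle, hlt⟩ := Building.exists_piece_of_getD_eq_false _
    (hword ▸ hlen) (by rw [hword, hlim.1 _ p hlen, hp])
  have hlen₂ := congrArg List.length heq
  simp only [hword, List.length_append] at hlen₂
  refine ⟨v, (iterBld_fromSet (c.wd_one_mem_level _)).2 v hv, l₁.length, fun t ht => ?_, hle, hlt⟩
  rw [← getD_append_append_length l₁ v l₂ ht, ← heq, hword, hlim.1 _ _ (by omega)]

lemma Proper.infix_of_mem_level_succ (hprop : c.Proper) {J : ℕ} {v : Word}
    (hv : v ∈ c.level (J + 1)) : c.wd J 1 <:+: v := by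
  obtain ⟨j, h1, h2, rfl⟩ := hv
  rw [← c.bld_word J j h1 h2]
  exact Building.infix_word_of_mem_pieces (hprop.2 J j h1 h2 _ (c.wd_one_mem_level J))

lemma HasLimit.occursInBi_wd_one (hlim : c.HasLimit V) (hprop : c.Proper) {x : ℤ → Bool}
    (hx : x ∈ XV V) {k₀ : ℤ} (hk₀ : x k₀ = false) (J : ℕ) : OccursInBi (c.wd J 1) x := by
  obtain ⟨L, hL⟩ := ((c.level_finite (J + 1)).image List.length).bddAbove
  obtain ⟨p, hp⟩ := hx (window x (k₀ - L) (2 * L + 1)) ⟨_, occursAtBi_window _ _ _⟩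
  have hcenter : V (p + L) = false := by
    have := hp L (by simp; omega)
    rwa [getD_window (by omega), sub_add_cancel, hk₀, eq_comm] at this
  obtain ⟨v, hv, q, hq, hqle, hqlt⟩ := hlim.exists_occursAtInf_level (J + 1) hcenter
  have hvL : v.length ≤ L := hL ⟨v, hv, rfl⟩
  refine OccursInBi.of_infix (hprop.infix_of_mem_level_succ hv)
    ⟨k₀ - L + (q - p : ℕ), fun t ht => ?_⟩
  have := hp (q - p + t) (by simp; omega)
  rw [getD_window (by omega), show p + (q - p + t) = q + t by omega] at this
  rw [hq t ht, ← this]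
  push_cast
  ring_nf

lemma HasLimit.XV_subset_closure_sorbit (hlim : c.HasLimit V) (hprop : c.Proper)
    {x : ℤ → Bool} (hx : x ∈ XV V) (hx1 : x ≠ fun _ => true) : XV V ⊆ closure (sorbit x) := by
  obtain ⟨k₀, hk₀⟩ : ∃ k₀, x k₀ = false := by
    by_contra! h
    exact hx1 (funext fun k => by simpa using h k)
  refine fun y hy => mem_closure_sorbit_iff.mpr fun u hu => ?_
  obtain ⟨i, hi⟩ := hlim.exists_infix_wd_one (hy u hu)
  exact (hlim.occursInBi_wd_one hprop hx hk₀ i).of_infix hi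

end

end RankConstruction

theorem statement_6_general (n : ℕ) (X : Set (ℤ → Bool))
    (hrank : SymbRankEq X n) :
    ((∃ V : ℕ → Bool, HasRankConstr V n ∧ ¬ HasRankConstr V (n - 1) ∧ X = XV V ∧
        ∃ c : RankConstruction n, c.HasLimit V ∧ c.Proper) ↔
      (∀ x ∈ X, x ≠ (fun _ => true) → X ⊆ closure (sorbit x))) ∧
    ((∀ V : ℕ → Bool, HasRankConstr V n → ¬ HasRankConstr V (n - 1) → X = XV V →
        ∃ c : RankConstruction n, c.HasLimit V ∧ c.Proper) ↔
      (∀ x ∈ X, x ≠ (fun _ => true) → X ⊆ closure (sorbit x))) := by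
  obtain ⟨V₀, ⟨c₀, hc₀⟩, hXV₀⟩ := hrank.1
  have hV₀ : ¬ HasRankConstr V₀ (n - 1) := fun h =>
    absurd (hrank.2 _ ⟨V₀, h, hXV₀⟩) (by have := c₀.one_le_rank; omega)
  have dense_of_proper (V : ℕ → Bool) (hXV : X = XV V) (c : RankConstruction n)
      (hlim : c.HasLimit V) (hprop : c.Proper) :
      ∀ x ∈ X, x ≠ (fun _ => true) → X ⊆ closure (sorbit x) := by
    subst hXV
    exact fun x hx hx1 => hlim.XV_subset_closure_sorbit hprop hx hx1
  have proper_of_dense (hdense : ∀ x ∈ X, x ≠ (fun _ => true) → X ⊆ closure (sorbit x))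
      (V : ℕ → Bool) (hV : HasRankConstr V n) (hXV : X = XV V) :
      ∃ c : RankConstruction n, c.HasLimit V ∧ c.Proper := by
    obtain ⟨c, hlim⟩ := hV
    subst hXV
    exact hlim.exists_proper_of_forall_dense hrank.2 hdense
  refine ⟨⟨fun ⟨V, _, _, hXV, c, hlim, hprop⟩ => dense_of_proper V hXV c hlim hprop,
    fun h => ⟨V₀, ⟨c₀, hc₀⟩, hV₀, hXV₀, proper_of_dense h V₀ ⟨c₀, hc₀⟩ hXV₀⟩⟩,
    ⟨fun h => ?_, fun h V hV _ hXV => proper_of_dense h V hV hXV⟩⟩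
  obtain ⟨c, hlim, hprop⟩ := h V₀ ⟨c₀, hc₀⟩ hV₀ hXV₀
  exact dense_of_proper V₀ hXV₀ c hlim hprop

/-- Theorem 4.2. For a subshift `X` of symbolic rank `n`, the three
conditions (existence of a proper rank-`n` construction for some/every rank-`n` word
generating `X`, and density of all orbits other than that of `1^ℤ`) are equivalent. -/
theorem statement_6 (n : ℕ) (hn : 1 ≤ n) (X : Set (ℤ → Bool)) (hX : IsSubshift X)
    (hrank : SymbRankEq X n) :
    ((∃ V : ℕ → Bool, HasRankConstr V n ∧ ¬ HasRankConstr V (n - 1) ∧ X = XV V ∧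
        ∃ c : RankConstruction n, c.HasLimit V ∧ c.Proper) ↔
      (∀ x ∈ X, x ≠ (fun _ => true) → X ⊆ closure (sorbit x))) ∧
    ((∀ V : ℕ → Bool, HasRankConstr V n → ¬ HasRankConstr V (n - 1) → X = XV V →
        ∃ c : RankConstruction n, c.HasLimit V ∧ c.Proper) ↔
      (∀ x ∈ X, x ≠ (fun _ => true) → X ⊆ closure (sorbit x))) :=
  statement_6_general n X hrank

end SubshiftRank
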